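/- arXiv:2605.10003 — 4 statements merged into one kernel-verified Lean document; each statement's English description precedes it below -/
import Mathlib

section
/- A finite family of density matrices (ρ₁,…,ρₙ) is set incoherent (simultaneously unitarily diagonalizable) if and only if Tr(ρᵢ²ρⱼ²) = Tr(ρᵢρⱼρᵢρⱼ) for all i < j. -/
open Matrix ComplexOrder

/-!
For Hermitian `A`, `B` the commutator `C = AB - BA` satisfies
`tr (Cᴴ C) = 2 (tr (A²B²) - tr (ABAB))`, so the trace condition says exactly that the `ρᵢ`
pairwise commute. Matrices diagonalized by a common unitary commute, and conversely a commuting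
family of Hermitian matrices has an orthonormal basis of joint eigenvectors, whose matrix is the
common diagonalizing unitary.
-/

open Module.End in
theorem LinearMap.IsSymmetric.exists_orthonormalBasis_eigenvectors_of_commute
    {𝕜 E ι : Type*} [RCLike 𝕜] [NormedAddCommGroup E] [InnerProductSpace 𝕜 E]
    [FiniteDimensional 𝕜 E] {d : ℕ} (hd : Module.finrank 𝕜 E = d) {T : ι → E →ₗ[𝕜] E}
    (hT : ∀ i, (T i).IsSymmetric) (hC : Pairwise (Function.onFun Commute T)) :
    ∃ b : OrthonormalBasis (Fin d) 𝕜 E, ∀ a i, ∃ μ : 𝕜, T i (b a) = μ • b a := by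
  classical
  let V : (ι → 𝕜) → Submodule 𝕜 E := fun χ => ⨅ i, eigenspace (T i) (χ i)
  have hOrth : OrthogonalFamily 𝕜 (fun χ => V χ) fun χ => (V χ).subtypeₗᵢ :=
    orthogonalFamily_iInf_eigenspaces hT
  -- `subordinateOrthonormalBasis` needs a finite index set: keep the nonzero joint eigenspaces
  have : Fintype {χ // V χ ≠ ⊥} :=
    (WellFoundedGT.finite_ne_bot_of_iSupIndep hOrth.independent).fintype
  have hInt : DirectSum.IsInternal fun χ : {χ // V χ ≠ ⊥} => V χ :=
    DirectSum.isInternal_ne_bot_iff.mpr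
      (_root_.LinearMap.IsSymmetric.directSum_isInternal_of_pairwise_commute hT hC)
  have hOrthNeBot := hOrth.comp (f := ((↑) : {χ // V χ ≠ ⊥} → ι → 𝕜)) Subtype.val_injective
  exact ⟨hInt.subordinateOrthonormalBasis hd hOrthNeBot, fun a i => ⟨_, mem_eigenspace_iff.mp
    ((Submodule.mem_iInf _).mp (hInt.subordinateOrthonormalBasis_subordinate hd a hOrthNeBot) i)⟩⟩

namespace Matrix

variable {𝕜 n : Type*} [RCLike 𝕜] [Fintype n] [DecidableEq n]

theorem IsDiag.commute {A B : Matrix n n 𝕜} (hA : A.IsDiag) (hB : B.IsDiag) : Commute A B := by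
  rw [← hA.diagonal_diag, ← hB.diagonal_diag]
  exact commute_diagonal _ _

theorem commute_of_isDiag_conj {U A B : Matrix n n 𝕜} (hU : U ∈ unitaryGroup n 𝕜)
    (hA : (U * A * Uᴴ).IsDiag) (hB : (U * B * Uᴴ).IsDiag) : Commute A B := by
  have hconj (X : Matrix n n 𝕜) : (Unitary.conjStarAlgAut 𝕜 _ ⟨U, hU⟩).symm (U * X * Uᴴ) = X :=
    (Unitary.conjStarAlgAut 𝕜 _ ⟨U, hU⟩).symm_apply_apply X
  simpa only [hconj] using (hA.commute hB).map (Unitary.conjStarAlgAut 𝕜 _ ⟨U, hU⟩).symm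

theorem IsHermitian.trace_conjTranspose_commutator_mul_commutator {A B : Matrix n n 𝕜}
    (hA : A.IsHermitian) (hB : B.IsHermitian) :
    trace ((A * B - B * A)ᴴ * (A * B - B * A)) =
      2 * (trace (A ^ 2 * B ^ 2) - trace (A * B * A * B)) := by
  have hBAAB : trace (B * A * A * B) = trace (A ^ 2 * B ^ 2) := by
    rw [show B * A * A * B = B * (A ^ 2 * B) by noncomm_ring, trace_mul_comm]
    noncomm_ring
  have hABBA : trace (A * B * B * A) = trace (A ^ 2 * B ^ 2) := by
    rw [show A * B * B * A = A * B ^ 2 * A by noncomm_ring, trace_mul_comm]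
    noncomm_ring
  have hBABA : trace (B * A * B * A) = trace (A * B * A * B) := by
    rw [show B * A * B * A = B * (A * B * A) by noncomm_ring, trace_mul_comm]
  rw [conjTranspose_sub, conjTranspose_mul, conjTranspose_mul, hA.eq, hB.eq]
  simp only [Matrix.mul_sub, Matrix.sub_mul, trace_sub, ← Matrix.mul_assoc]
  rw [hBAAB, hABBA, hBABA]
  ring

theorem IsHermitian.commute_iff_trace_sq_mul_sq_eq {A B : Matrix n n 𝕜}
    (hA : A.IsHermitian) (hB : B.IsHermitian) :
    Commute A B ↔ trace (A ^ 2 * B ^ 2) = trace (A * B * A * B) := by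
  refine ⟨fun h => congrArg trace ?_, fun h => ?_⟩
  · rw [mul_assoc A B A, ← h.eq]
    noncomm_ring
  have := hA.trace_conjTranspose_commutator_mul_commutator hB
  rw [h, sub_self, mul_zero, trace_conjTranspose_mul_self_eq_zero_iff] at this
  exact sub_eq_zero.mp this

theorem exists_unitary_isDiag_of_orthonormalBasis_eigenvectors {ι : Type*}
    {A : ι → Matrix n n 𝕜} (b : OrthonormalBasis n 𝕜 (EuclideanSpace 𝕜 n))
    (hA : ∀ j i, ∃ μ : 𝕜, toEuclideanLin (A i) (b j) = μ • b j) :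
    ∃ U ∈ unitaryGroup n 𝕜, ∀ i, (U * A i * Uᴴ).IsDiag := by
  set W := (EuclideanSpace.basisFun n 𝕜).toBasis.toMatrix b.toBasis
  have hW : W ∈ unitaryGroup n 𝕜 :=
    (EuclideanSpace.basisFun n 𝕜).toMatrix_orthonormalBasis_mem_unitary b
  refine ⟨star W, Unitary.star_mem hW, fun i => ?_⟩
  choose μ hμ using fun j => hA j i
  have hAW : A i * W = W * diagonal μ := by
    ext k j
    have := congrArg (fun v : EuclideanSpace 𝕜 n => v k) (hμ j)
    rw [mul_diagonal, mul_comm]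
    simpa [W, Module.Basis.toMatrix_apply, mulVec, dotProduct, mul_apply] using this
  rw [← star_eq_conjTranspose, star_star, Matrix.mul_assoc, hAW, ← Matrix.mul_assoc,
    mem_unitaryGroup_iff'.mp hW, Matrix.one_mul]
  exact isDiag_diagonal μ

theorem exists_unitary_isDiag_of_commute {ι : Type*} {A : ι → Matrix n n 𝕜}
    (hA : ∀ i, (A i).IsHermitian) (hC : Pairwise (Function.onFun Commute A)) :
    ∃ U ∈ unitaryGroup n 𝕜, ∀ i, (U * A i * Uᴴ).IsDiag := by
  have hT : ∀ i, (toEuclideanLin (A i)).IsSymmetric :=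
    fun i => isSymmetric_toEuclideanLin_iff.mpr (hA i)
  have hTC : Pairwise (Function.onFun Commute fun i => toEuclideanLin (A i)) :=
    fun _ _ hij => (hC hij).map (toLpLinAlgEquiv (R := 𝕜) (n := n) 2)
  obtain ⟨b, hb⟩ := LinearMap.IsSymmetric.exists_orthonormalBasis_eigenvectors_of_commute
    finrank_euclideanSpace hT hTC
  exact exists_unitary_isDiag_of_orthonormalBasis_eigenvectors
    (b.reindex (Fintype.equivFin n).symm) fun j i => by
      simpa only [OrthonormalBasis.reindex_apply] using hb _ i

end Matrix

theorem stmt6_general (d m : ℕ) (ρ : Fin m → Matrix (Fin d) (Fin d) ℂ)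
    (hpsd : ∀ i, (ρ i).PosSemidef) :
    (∃ U ∈ Matrix.unitaryGroup (Fin d) ℂ,
        ∀ i, ((U : Matrix (Fin d) (Fin d) ℂ) * ρ i * Uᴴ).IsDiag) ↔
      ∀ i j : Fin m, i < j →
        trace (ρ i ^ 2 * ρ j ^ 2) = trace (ρ i * ρ j * ρ i * ρ j) := by
  have hcomm (i j : Fin m) :
      Commute (ρ i) (ρ j) ↔ trace (ρ i ^ 2 * ρ j ^ 2) = trace (ρ i * ρ j * ρ i * ρ j) :=
    (hpsd i).isHermitian.commute_iff_trace_sq_mul_sq_eq (hpsd j).isHermitian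
  constructor
  · rintro ⟨U, hU, hdiag⟩ i j -
    exact (hcomm i j).mp (commute_of_isDiag_conj hU (hdiag i) (hdiag j))
  · intro htrace
    refine exists_unitary_isDiag_of_commute (fun i => (hpsd i).isHermitian) fun i j hij => ?_
    rcases hij.lt_or_gt with hij | hji
    · exact (hcomm i j).mpr (htrace i j hij)
    · exact ((hcomm j i).mpr (htrace j i hji)).symm

theorem stmt6 (d m : ℕ) (ρ : Fin m → Matrix (Fin d) (Fin d) ℂ)
    (hpsd : ∀ i, (ρ i).PosSemidef) (htr : ∀ i, trace (ρ i) = (1 : ℂ)) :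
    (∃ U ∈ Matrix.unitaryGroup (Fin d) ℂ,
        ∀ i, ((U : Matrix (Fin d) (Fin d) ℂ) * ρ i * Uᴴ).IsDiag) ↔
      ∀ i j : Fin m, i < j →
        trace (ρ i ^ 2 * ρ j ^ 2) = trace (ρ i * ρ j * ρ i * ρ j) :=
  stmt6_general d m ρ hpsd
end

section
/- Let ρ₀ = diag(1/2, 1/2, 0), σ₀ = diag(1/2, 0, 1/2), ρ₁ = diag(1/2, 1/2, 0), and σ₁ be the 3×3 matrix with rows (1/4, 0, 1/4), (0, 1/4, 0), (1/4, 0, 1/2). Then all four matrices are density matrices, Tr(ρ₀²) = Tr(ρ₁²) = Tr(σ₀²) = Tr(σ₁²) = 1/2, Tr(ρ₀σ₀) = Tr(ρ₁σ₁) = 1/4, ρ₀σ₀ = σ₀ρ₀, but ρ₁σ₁ ≠ σ₁ρ₁. -/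
/-!
`ρ₀` and `σ₀` are diagonal with nonnegative entries, so they are positive semidefinite and
commute. `σ₁ = Bᴴ B` for an upper triangular `B`, hence it is positive semidefinite, and it does
not commute with `ρ₁ = ρ₀`: the `(0, 2)` entry of `ρ₁ σ₁` is `1/8`, that of `σ₁ ρ₁` is `0`.
-/

open Matrix ComplexOrder

noncomputable def ρ₀ : Matrix (Fin 3) (Fin 3) ℂ := !![1/2, 0, 0; 0, 1/2, 0; 0, 0, 0]
noncomputable def σ₀ : Matrix (Fin 3) (Fin 3) ℂ := !![1/2, 0, 0; 0, 0, 0; 0, 0, 1/2]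
noncomputable def ρ₁ : Matrix (Fin 3) (Fin 3) ℂ := !![1/2, 0, 0; 0, 1/2, 0; 0, 0, 0]
noncomputable def σ₁ : Matrix (Fin 3) (Fin 3) ℂ := !![1/4, 0, 1/4; 0, 1/4, 0; 1/4, 0, 1/2]

def IsDensityMatrix {n : Type*} [Fintype n] (ρ : Matrix n n ℂ) : Prop :=
  ρ.PosSemidef ∧ ρ.trace = 1

lemma isDensityMatrix_diagonal {n : Type*} [Fintype n] [DecidableEq n] {d : n → ℂ}
    (hd : 0 ≤ d) (hsum : ∑ i, d i = 1) : IsDensityMatrix (diagonal d) :=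
  ⟨.diagonal hd, by rw [trace_diagonal, hsum]⟩

lemma ρ₀_eq_diagonal : ρ₀ = diagonal ![1/2, 1/2, 0] := by
  rw [diagonal_fin_three]; rfl

lemma σ₀_eq_diagonal : σ₀ = diagonal ![1/2, 0, 1/2] := by
  rw [diagonal_fin_three]; rfl

lemma ρ₁_eq_ρ₀ : ρ₁ = ρ₀ := rfl

lemma σ₁_eq_conjTranspose_mul_self :
    σ₁ = (!![1/2, 0, 1/2; 0, 1/2, 0; 0, 0, 1/2] : Matrix (Fin 3) (Fin 3) ℂ)ᴴ *
      !![1/2, 0, 1/2; 0, 1/2, 0; 0, 0, 1/2] := by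
  ext i j
  fin_cases i <;> fin_cases j <;> simp [σ₁, mul_apply, Fin.sum_univ_three, map_ofNat] <;> norm_num

lemma isDensityMatrix_ρ₀ : IsDensityMatrix ρ₀ := by
  rw [ρ₀_eq_diagonal]
  refine isDensityMatrix_diagonal (fun i => ?_) ?_
  · fin_cases i <;> simp
  · simp [Fin.sum_univ_three]; norm_num

lemma isDensityMatrix_σ₀ : IsDensityMatrix σ₀ := by
  rw [σ₀_eq_diagonal]
  refine isDensityMatrix_diagonal (fun i => ?_) ?_
  · fin_cases i <;> simp
  · simp [Fin.sum_univ_three]; norm_num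

lemma isDensityMatrix_σ₁ : IsDensityMatrix σ₁ := by
  refine ⟨σ₁_eq_conjTranspose_mul_self ▸ posSemidef_conjTranspose_mul_self _, ?_⟩
  simp [σ₁, trace_fin_three]; norm_num

lemma commute_ρ₀_σ₀ : Commute ρ₀ σ₀ := by
  rw [ρ₀_eq_diagonal, σ₀_eq_diagonal]
  exact commute_diagonal _ _

lemma not_commute_ρ₁_σ₁ : ¬Commute ρ₁ σ₁ := fun h => by
  simpa [ρ₁, σ₁, mul_apply, Fin.sum_univ_three] using congrFun (congrFun h.eq 0) 2

theorem stmt10 :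
    (ρ₀.PosSemidef ∧ trace ρ₀ = 1) ∧ (σ₀.PosSemidef ∧ trace σ₀ = 1) ∧
    (ρ₁.PosSemidef ∧ trace ρ₁ = 1) ∧ (σ₁.PosSemidef ∧ trace σ₁ = 1) ∧
    trace (ρ₀ * ρ₀) = 1/2 ∧ trace (ρ₁ * ρ₁) = 1/2 ∧
    trace (σ₀ * σ₀) = 1/2 ∧ trace (σ₁ * σ₁) = 1/2 ∧
    trace (ρ₀ * σ₀) = 1/4 ∧ trace (ρ₁ * σ₁) = 1/4 ∧
    ρ₀ * σ₀ = σ₀ * ρ₀ ∧ ρ₁ * σ₁ ≠ σ₁ * ρ₁ := by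
  refine ⟨isDensityMatrix_ρ₀, isDensityMatrix_σ₀, ρ₁_eq_ρ₀ ▸ isDensityMatrix_ρ₀,
    isDensityMatrix_σ₁, ?_, ?_, ?_, ?_, ?_, ?_, commute_ρ₀_σ₀, not_commute_ρ₁_σ₁⟩
  all_goals simp [ρ₀, σ₀, ρ₁, σ₁, trace_fin_three]; norm_num
end

section
/- Suppose ρ is a 3×3 Hermitian matrix with three distinct eigenvalues a₁, a₂, a₃, diagonal in an orthonormal basis, D = diag(d₁, d₂, d₃) in the same basis, and σ is Hermitian satisfying Tr(ρᵏσ) = Tr(ρᵏD) for k = 0, 1, 2 and Tr(σ²) = Tr(D²). Then σ = D, and in particular ρσ = σρ. -/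
/-!
The moments `Tr (ρᵏ σ) = ∑ᵢ aᵢᵏ σᵢᵢ`, `k = 0, 1, 2`, are the image of `diag σ` under the
Vandermonde matrix of the distinct `aᵢ`, so `diag σ = d`. Then `Tr σ² - Tr D²` is `Tr (Bᴴ B)`,
the sum of the `|σᵢⱼ|²` over `i ≠ j`, where `B` is the off-diagonal part of the Hermitian `σ`;
so `B = 0`.
-/

open Matrix

namespace Matrix

variable {n R : Type*} [Fintype n] [DecidableEq n]

lemma trace_diagonal_pow_mul [CommSemiring R] (a : n → R) (k : ℕ) (M : Matrix n n R) :
    trace (diagonal a ^ k * M) = ∑ i, a i ^ k * M i i := by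
  simp [trace, diagonal_pow, diagonal_mul]

lemma diag_eq_of_trace_diagonal_pow_mul_eq {K : Type*} [CommRing K] [IsDomain K] {m : ℕ}
    {a : Fin m → K} (ha : Function.Injective a) {M N : Matrix (Fin m) (Fin m) K}
    (h : ∀ k : Fin m, trace (diagonal a ^ (k : ℕ) * M) = trace (diagonal a ^ (k : ℕ) * N)) :
    M.diag = N.diag := by
  refine sub_eq_zero.mp (eq_zero_of_forall_pow_sum_mul_pow_eq_zero ha fun k => ?_)
  have hk := h k
  simp only [trace_diagonal_pow_mul] at hk
  simp only [Pi.sub_apply, diag_apply, sub_mul, Finset.sum_sub_distrib]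
  simp only [mul_comm (M _ _), mul_comm (N _ _), hk, sub_self]

lemma trace_mul_diagonal_eq_zero_of_diag_eq_zero [NonUnitalNonAssocSemiring R]
    {B : Matrix n n R} (hB : B.diag = 0) (v : n → R) :
    trace (B * diagonal v) = 0 := by
  simp [trace, mul_diagonal, show ∀ i, B i i = 0 from congrFun hB]

lemma trace_diagonal_mul_eq_zero_of_diag_eq_zero [NonUnitalNonAssocSemiring R]
    {B : Matrix n n R} (hB : B.diag = 0) (v : n → R) :
    trace (diagonal v * B) = 0 := by
  simp [trace, diagonal_mul, show ∀ i, B i i = 0 from congrFun hB]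

lemma IsHermitian.eq_diagonal_of_trace_mul_self_eq [Ring R] [PartialOrder R] [StarRing R]
    [StarOrderedRing R] [NoZeroDivisors R] {A : Matrix n n R} (hA : A.IsHermitian)
    (h : trace (A * A) = trace (diagonal A.diag * diagonal A.diag)) :
    A = diagonal A.diag := by
  set Δ := diagonal A.diag
  set B := A - Δ
  have hBdiag : B.diag = 0 := by ext i; simp [B, Δ]
  have hBherm : B.IsHermitian :=
    hA.sub (isHermitian_diagonal_iff.mpr fun i => congrFun (congrFun hA i) i)
  have hsplit : A * A = B * B + B * Δ + Δ * B + Δ * Δ := by simp only [B]; noncomm_ring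
  have htrB : trace (Bᴴ * B) = 0 := by
    rw [hsplit, trace_add, trace_add, trace_add, trace_mul_diagonal_eq_zero_of_diag_eq_zero hBdiag,
      trace_diagonal_mul_eq_zero_of_diag_eq_zero hBdiag, add_zero, add_zero] at h
    rw [hBherm.eq]
    simpa using h
  exact sub_eq_zero.mp (trace_conjTranspose_mul_self_eq_zero_iff.mp htrB)

end Matrix

theorem stmt11 (a d : Fin 3 → ℝ)
    (hdist : Function.Injective a)
    (ρ D σ : Matrix (Fin 3) (Fin 3) ℂ)
    (hρ : ρ = Matrix.diagonal fun i => (a i : ℂ))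
    (hD : D = Matrix.diagonal fun i => (d i : ℂ))
    (hσ : σ.IsHermitian)
    (h0 : trace σ = trace D)
    (h1 : trace (ρ * σ) = trace (ρ * D))
    (h2 : trace (ρ ^ 2 * σ) = trace (ρ ^ 2 * D))
    (h3 : trace (σ ^ 2) = trace (D ^ 2)) :
    σ = D ∧ ρ * σ = σ * ρ := by
  subst hρ hD
  have hdiag : σ.diag = fun i => (d i : ℂ) := by
    have hmoments : ∀ k : Fin 3, trace ((diagonal fun i => (a i : ℂ)) ^ (k : ℕ) * σ) =
        trace ((diagonal fun i => (a i : ℂ)) ^ (k : ℕ) * diagonal fun i => (d i : ℂ)) := by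
      intro k
      fin_cases k
      · simpa using h0
      · simpa using h1
      · exact h2
    simpa using diag_eq_of_trace_diagonal_pow_mul_eq
      (Complex.ofReal_injective.comp hdist) hmoments
  have hσD : σ = diagonal fun i => (d i : ℂ) := by
    have h3' : trace (σ * σ) = trace (diagonal σ.diag * diagonal σ.diag) := by
      rw [← sq, h3, hdiag, sq]
    open scoped ComplexOrder in rw [hσ.eq_diagonal_of_trace_mul_self_eq h3', hdiag]
  exact ⟨hσD, hσD ▸ commute_diagonal _ _⟩
end

section
/- If (ρ, σ) and (ρ₀, σ₀) are pairs of 3×3 density matrices with Tr(ρᵐ) = Tr(ρ₀ᵐ) and Tr(σᵐ) = Tr(σ₀ᵐ) for m = 2, 3, Tr(ρσ) = Tr(ρ₀σ₀), Tr(ρ²σ) = Tr(ρ₀²σ₀), Tr(ρσ²) = Tr(ρ₀σ₀²), and ρ₀σ₀ = σ₀ρ₀, then ρσ = σρ. -/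
open Matrix ComplexOrder Polynomial Unitary

/-!
Traces of the first three powers determine the spectrum of a 3 × 3 Hermitian matrix, so `ρ` and
`σ` are unitarily conjugate to `ρ₀` and `σ₀`. If `σ₀` has simple spectrum, the commuting `ρ₀` is
`p(σ₀)` for a real polynomial `p` of degree at most 2, and `Tr (ρ - p(σ))²` is a combination of
the prescribed invariants and of `Tr σ⁴` (fixed by the conjugacy); it therefore equals
`Tr (ρ₀ - p(σ₀))² = 0`, so `ρ = p(σ)`. The case where `ρ₀` has simple spectrum is symmetric.
Otherwise `ρ₀ = x + y P₀`, `σ₀ = v + w Q₀` and, by conjugacy, `ρ = x + y P`, `σ = v + w Q` with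
rank-one projections `P`, `Q`, `P₀`, `Q₀`; unless `y w = 0`, `Tr (P Q) = Tr (P₀ Q₀)`, an integer
because `P₀ Q₀` is idempotent. As `Tr (P - Q)² = 2 - 2 Tr (P Q) ≥ 0`, this integer is `1`,
forcing `P = Q`, or `0`, forcing `P Q = 0`.
-/

theorem commute_aeval_self {R A : Type*} [CommSemiring R] [Semiring A] [Algebra R A] (a : A)
    (p : R[X]) : Commute a (aeval a p) := by
  have h := congrArg (aeval a) (mul_comm X p)
  rwa [map_mul, map_mul, aeval_X] at h

theorem prod_X_sub_C_eq_of_sum_pow_eq {K : Type*} [Field K] [CharZero K] {a b : Fin 3 → K}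
    (h1 : ∑ i, a i = ∑ i, b i) (h2 : ∑ i, a i ^ 2 = ∑ i, b i ^ 2)
    (h3 : ∑ i, a i ^ 3 = ∑ i, b i ^ 3) :
    ∏ i, (X - C (a i)) = ∏ i, (X - C (b i)) := by
  simp only [Fin.sum_univ_three] at h1 h2 h3
  simp only [Fin.prod_univ_three]
  -- Newton's identities recover the elementary symmetric functions from the power sums.
  have e2 : a 0 * a 1 + a 0 * a 2 + a 1 * a 2 = b 0 * b 1 + b 0 * b 2 + b 1 * b 2 := by
    linear_combination (a 0 + a 1 + a 2 + b 0 + b 1 + b 2) / 2 * h1 - h2 / 2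
  have e3 : a 0 * a 1 * a 2 = b 0 * b 1 * b 2 := by
    linear_combination ((a 0 + a 1 + a 2) ^ 2 + (a 0 + a 1 + a 2) * (b 0 + b 1 + b 2)
      + (b 0 + b 1 + b 2) ^ 2 - 3 * (a 0 ^ 2 + a 1 ^ 2 + a 2 ^ 2)) / 6 * h1
      - (b 0 + b 1 + b 2) / 2 * h2 + h3 / 3
  have c1 := congrArg C h1
  have c2 := congrArg C e2
  have c3 := congrArg C e3
  simp only [map_add, map_mul] at c1 c2 c3
  linear_combination (-X ^ 2) * c1 + X * c2 - c3

theorem commute_smul_one_add_smul_iff {K A : Type*} [Field K] [Ring A] [Algebra K A] {P Q : A}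
    {x y v w : K} (hy : y ≠ 0) (hw : w ≠ 0) :
    Commute (x • 1 + y • P) (v • 1 + w • Q) ↔ Commute P Q := by
  have h : (x • 1 + y • P) * (v • 1 + w • Q) - (v • 1 + w • Q) * (x • 1 + y • P) =
      (y * w) • (P * Q - Q * P) := by
    simp only [add_mul, mul_add, smul_mul_smul_comm, one_mul, mul_one]
    module
  rw [commute_iff_eq, commute_iff_eq, ← sub_eq_zero, h, smul_eq_zero, sub_eq_zero]
  simp [hy, hw]

namespace Matrix

theorem diagonal_eq_smul_one_add_smul_single {n R : Type*} [DecidableEq n] [CommRing R]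
    {d : n → R} {k : n} {c : R} (h : ∀ l ≠ k, d l = c) :
    diagonal d = c • 1 + (d k - c) • single k k 1 := by
  ext i j
  obtain rfl | hij := eq_or_ne i j
  · obtain rfl | hik := eq_or_ne i k
    · simp
    · simp [h i hik, hik.symm]
  · have hkij : ¬(k = i ∧ k = j) := fun h => hij (h.1.symm.trans h.2)
    simp [diagonal_apply_ne _ hij, one_apply_ne hij, hkij]

variable {n : Type*} [Fintype n] {𝕜 : Type*} [RCLike 𝕜]

def IsRankOneProjection (P : Matrix n n 𝕜) : Prop :=
  P.IsHermitian ∧ IsIdempotentElem P ∧ P.trace = 1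

theorem IsRankOneProjection.commute_of_trace_mul_eq_natCast {P Q : Matrix n n 𝕜}
    (hP : P.IsRankOneProjection) (hQ : Q.IsRankOneProjection) {r : ℕ} (h : trace (P * Q) = r) :
    Commute P Q := by
  obtain ⟨hPH, hPP, hPt⟩ := hP
  obtain ⟨hQH, hQQ, hQt⟩ := hQ
  have hdist : trace ((P - Q)ᴴ * (P - Q)) = 2 - 2 * r := by
    rw [(hPH.sub hQH).eq, sub_mul, mul_sub, mul_sub, hPP.eq, hQQ.eq, trace_sub, trace_sub,
      trace_sub, trace_mul_comm Q P, h, hPt, hQt]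
    ring
  have hr : r ≤ 1 := by
    have h0 := (posSemidef_conjTranspose_mul_self (P - Q)).trace_nonneg
    rw [hdist, show (2 : 𝕜) - 2 * r = ((2 - 2 * r : ℝ) : 𝕜) by push_cast; ring,
      RCLike.ofReal_nonneg] at h0
    exact_mod_cast (by linarith : (r : ℝ) ≤ 1)
  interval_cases r
  · have hQP : Q * P = 0 := by
      rw [← trace_conjTranspose_mul_self_eq_zero_iff, conjTranspose_mul, hPH.eq, hQH.eq,
        ← mul_assoc, mul_assoc P, hQQ.eq, trace_mul_comm, ← mul_assoc, hPP.eq, h, Nat.cast_zero]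
    have hPQ : P * Q = 0 := by
      simpa [hPH.eq, hQH.eq] using congrArg conjTranspose hQP
    exact hPQ.trans hQP.symm
  · have hPQ : P - Q = 0 := trace_conjTranspose_mul_self_eq_zero_iff.1 (by rw [hdist]; norm_num)
    rw [sub_eq_zero.1 hPQ]

variable [DecidableEq n]

theorem eq_diagonal_of_commute_diagonal {R : Type*} [CommRing R] [IsDomain R]
    {M : Matrix n n R} {d : n → R} (hd : Function.Injective d) (h : Commute M (diagonal d)) :
    M = diagonal M.diag := by
  ext i j
  obtain rfl | hij := eq_or_ne i j
  · simp
  · have hMij := congrFun (congrFun h.eq i) j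
    rw [mul_diagonal, diagonal_mul, mul_comm, ← sub_eq_zero, ← sub_mul] at hMij
    simpa [diagonal_apply_ne _ hij, sub_ne_zero.2 (hd.ne hij).symm] using hMij

theorem aeval_diagonal {R A : Type*} [CommSemiring R] [CommSemiring A] [Algebra R A]
    (d : n → A) (p : R[X]) : aeval (diagonal d) p = diagonal (fun i => aeval (d i) p) := by
  rw [← diagonalAlgHom_apply (R := R), aeval_algHom_apply, aeval_pi_apply]
  rfl

theorem exists_trace_eq_natCast_of_isIdempotentElem {K : Type*} [Field K] {E : Matrix n n K}
    (h : IsIdempotentElem E) : ∃ r : ℕ, trace E = r := by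
  have h' : IsIdempotentElem (toLin' E) := by
    rw [IsIdempotentElem, Module.End.mul_eq_comp, ← toLin'_mul, h.eq]
  exact ⟨_, by rw [← trace_toLin'_eq, (LinearMap.IsIdempotentElem.isProj_range _ h').trace]⟩

theorem isHermitian_aeval {B : Matrix n n 𝕜} (hB : B.IsHermitian) (p : ℝ[X]) :
    (aeval B p).IsHermitian := by
  rw [aeval_eq_sum_range]
  exact isSelfAdjoint_sum _ fun i _ => (IsSelfAdjoint.all _).smul (hB.pow i).isSelfAdjoint

theorem aeval_conjStarAlgAut (U : unitary (Matrix n n 𝕜)) (A : Matrix n n 𝕜) (p : ℝ[X]) :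
    aeval (conjStarAlgAut 𝕜 _ U A) p = conjStarAlgAut 𝕜 _ U (aeval A p) := by
  rw [← aeval_map_algebraMap 𝕜, aeval_algHom_apply, aeval_map_algebraMap]

theorem trace_aeval_conjStarAlgAut (U : unitary (Matrix n n 𝕜)) (A : Matrix n n 𝕜)
    (p : ℝ[X]) : trace (aeval (conjStarAlgAut 𝕜 _ U A) p) = trace (aeval A p) := by
  rw [aeval_conjStarAlgAut, trace_map]

theorem trace_mul_aeval (A B : Matrix n n 𝕜) (p : ℝ[X]) :
    trace (A * aeval B p) =
      ∑ k ∈ Finset.range (p.natDegree + 1), p.coeff k • trace (A * B ^ k) := by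
  simp only [aeval_eq_sum_range, Finset.mul_sum, mul_smul_comm, trace_sum, trace_smul]

theorem trace_mul_self_sub_aeval (A B : Matrix n n 𝕜) (p : ℝ[X]) :
    trace ((A - aeval B p) * (A - aeval B p)) =
      trace (A ^ 2) - 2 * trace (A * aeval B p) + trace (aeval B (p ^ 2)) := by
  rw [sub_mul, mul_sub, mul_sub, ← map_mul, ← sq, ← sq, trace_sub, trace_sub, trace_sub,
    trace_mul_comm (aeval B p) A]
  ring

namespace IsRankOneProjection

theorem single (k : n) : IsRankOneProjection (single k k (1 : 𝕜)) :=
  ⟨by simp [IsHermitian, conjTranspose_single], by simp [IsIdempotentElem],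
    trace_single_eq_same ..⟩

theorem map {P : Matrix n n 𝕜} (hP : P.IsRankOneProjection)
    (φ : Matrix n n 𝕜 ≃⋆ₐ[𝕜] Matrix n n 𝕜) : (φ P).IsRankOneProjection :=
  ⟨hP.1.isSelfAdjoint.map φ, hP.2.1.map φ, by rw [trace_map, hP.2.2]⟩

theorem commute_smul_one_add_smul_of_trace_mul_eq {P Q P₀ Q₀ : Matrix n n 𝕜}
    (hP : P.IsRankOneProjection) (hQ : Q.IsRankOneProjection)
    (hP₀ : P₀.IsRankOneProjection) (hQ₀ : Q₀.IsRankOneProjection) {x y v w : 𝕜}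
    (h : trace ((x • 1 + y • P) * (v • 1 + w • Q)) =
      trace ((x • 1 + y • P₀) * (v • 1 + w • Q₀)))
    (hc : Commute (x • 1 + y • P₀) (v • 1 + w • Q₀)) :
    Commute (x • 1 + y • P) (v • 1 + w • Q) := by
  obtain rfl | hy := eq_or_ne y 0
  · simpa using (Commute.one_left _).smul_left x
  obtain rfl | hw := eq_or_ne w 0
  · simpa using (Commute.one_right _).smul_right v
  have expand : ∀ {R S : Matrix n n 𝕜}, R.IsRankOneProjection → S.IsRankOneProjection →
      trace ((x • 1 + y • R) * (v • 1 + w • S)) =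
        x * v * Fintype.card n + x * w + y * v + y * w * trace (R * S) := by
    intro R S hR hS
    simp only [add_mul, mul_add, smul_mul_smul_comm, one_mul, mul_one, trace_add, trace_smul,
      trace_one, hR.2.2, hS.2.2, smul_eq_mul]
    ring
  have htr : trace (P * Q) = trace (P₀ * Q₀) := by
    rw [expand hP hQ, expand hP₀ hQ₀] at h
    exact mul_left_cancel₀ (mul_ne_zero hy hw) (by linear_combination h)
  rw [commute_smul_one_add_smul_iff hy hw] at hc ⊢
  obtain ⟨r, hr⟩ :=
    exists_trace_eq_natCast_of_isIdempotentElem (hP₀.2.1.mul_of_commute hc hQ₀.2.1)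
  exact hP.commute_of_trace_mul_eq_natCast hQ (htr.trans hr)

end IsRankOneProjection

namespace IsHermitian

variable {A B A₀ B₀ : Matrix n n 𝕜}

theorem trace_pow_eq_sum_eigenvalues (hA : A.IsHermitian) (k : ℕ) :
    trace (A ^ k) = ∑ i, (hA.eigenvalues i : 𝕜) ^ k := by
  conv_lhs => rw [hA.spectral_theorem]
  rw [← map_pow, trace_map, diagonal_pow, trace_diagonal]
  rfl

theorem exists_conj_eq_of_eigenvalues_eq (hA : A.IsHermitian) (hB : B.IsHermitian)
    (h : hA.eigenvalues = hB.eigenvalues) :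
    ∃ U : unitary (Matrix n n 𝕜), A = conjStarAlgAut 𝕜 _ U B := by
  refine ⟨hA.eigenvectorUnitary * star hB.eigenvectorUnitary, ?_⟩
  rw [conjStarAlgAut_mul_apply, conjStarAlgAut_star_eigenvectorUnitary, ← h]
  exact hA.spectral_theorem

theorem exists_aeval_eq_of_commute (hA : A.IsHermitian) (hB : B.IsHermitian)
    (hinj : Function.Injective hB.eigenvalues) (hc : Commute A B) :
    ∃ p : ℝ[X], p.degree < Fintype.card n ∧ A = aeval B p := by
  set φ := conjStarAlgAut 𝕜 _ hB.eigenvectorUnitary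
  have hD : φ.symm B = diagonal (RCLike.ofReal ∘ hB.eigenvalues) := by
    rw [φ.symm_apply_eq]
    exact hB.spectral_theorem
  have hM : φ.symm A = diagonal (φ.symm A).diag := by
    refine eq_diagonal_of_commute_diagonal (RCLike.ofReal_injective.comp hinj) ?_
    rw [← hD]
    exact hc.map φ.symm
  set m : n → ℝ := fun i => RCLike.re ((φ.symm A).diag i)
  have hMm : (φ.symm A).diag = RCLike.ofReal ∘ m :=
    (IsHermitian.coe_re_diag (hA.isSelfAdjoint.map φ.symm)).symm
  set p := Lagrange.interpolate Finset.univ hB.eigenvalues m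
  refine ⟨p, Finset.card_univ (α := n) ▸ Lagrange.degree_interpolate_lt _ hinj.injOn, ?_⟩
  have hp : ∀ i, eval (hB.eigenvalues i) p = m i := fun i =>
    Lagrange.eval_interpolate_at_node _ hinj.injOn (Finset.mem_univ i)
  rw [← φ.apply_symm_apply A, ← φ.apply_symm_apply B, aeval_conjStarAlgAut, hM, hMm, hD,
    aeval_diagonal]
  congr 2
  ext i
  simp [← hp, aeval_algebraMap_apply]

theorem eq_aeval_of_trace_eq (hA : A.IsHermitian) (hB : B.IsHermitian) {p : ℝ[X]}
    (h₀ : A₀ = aeval B₀ p) (hA₀ : trace (A ^ 2) = trace (A₀ ^ 2))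
    (hAB : ∀ k, p.coeff k ≠ 0 → trace (A * B ^ k) = trace (A₀ * B₀ ^ k))
    (hBB₀ : ∀ q : ℝ[X], trace (aeval B q) = trace (aeval B₀ q)) :
    A = aeval B p := by
  have hmul : trace (A * aeval B p) = trace (A₀ * aeval B₀ p) := by
    simp only [trace_mul_aeval]
    refine Finset.sum_congr rfl fun k _ => ?_
    obtain hk | hk := eq_or_ne (p.coeff k) 0
    · simp [hk]
    · rw [hAB k hk]
  have hX : (A - aeval B p)ᴴ = A - aeval B p := (hA.sub (isHermitian_aeval hB p)).eq
  rw [← sub_eq_zero, ← trace_conjTranspose_mul_self_eq_zero_iff, hX, trace_mul_self_sub_aeval,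
    hA₀, hmul, hBB₀, ← trace_mul_self_sub_aeval, ← h₀, sub_self, zero_mul, trace_zero]

theorem commute_of_injective_eigenvalues (hA : A.IsHermitian) (hB : B.IsHermitian)
    (hA₀ : A₀.IsHermitian) (hB₀ : B₀.IsHermitian) (hinj : Function.Injective hB₀.eigenvalues)
    (hc : Commute A₀ B₀) (hA2 : trace (A ^ 2) = trace (A₀ ^ 2))
    (hAB : ∀ k < Fintype.card n, trace (A * B ^ k) = trace (A₀ * B₀ ^ k))
    (hBB₀ : ∀ q : ℝ[X], trace (aeval B q) = trace (aeval B₀ q)) :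
    Commute A B := by
  obtain ⟨p, hp, hA₀p⟩ := hA₀.exists_aeval_eq_of_commute hB₀ hinj hc
  have hk : ∀ k, p.coeff k ≠ 0 → k < Fintype.card n := fun k hk => by
    exact_mod_cast (le_degree_of_ne_zero hk).trans_lt hp
  rw [hA.eq_aeval_of_trace_eq hB hA₀p hA2 (fun k h => hAB k (hk k h)) hBB₀]
  exact (commute_aeval_self B p).symm

theorem exists_conj_eq_of_trace_pow_eq {A B : Matrix (Fin 3) (Fin 3) 𝕜} (hA : A.IsHermitian)
    (hB : B.IsHermitian) (h1 : trace A = trace B) (h2 : trace (A ^ 2) = trace (B ^ 2))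
    (h3 : trace (A ^ 3) = trace (B ^ 3)) :
    ∃ U : unitary (Matrix (Fin 3) (Fin 3) 𝕜), A = conjStarAlgAut 𝕜 _ U B := by
  refine hA.exists_conj_eq_of_eigenvalues_eq hB ((hA.eigenvalues_eq_eigenvalues_iff hB).2 ?_)
  rw [hA.charpoly_eq, hB.charpoly_eq]
  rw [hA.trace_eq_sum_eigenvalues, hB.trace_eq_sum_eigenvalues] at h1
  rw [hA.trace_pow_eq_sum_eigenvalues, hB.trace_pow_eq_sum_eigenvalues] at h2 h3
  exact prod_X_sub_C_eq_of_sum_pow_eq h1 h2 h3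

theorem exists_eq_smul_one_add_smul_of_not_injective {A : Matrix (Fin 3) (Fin 3) 𝕜}
    (hA : A.IsHermitian) (h : ¬Function.Injective hA.eigenvalues) :
    ∃ (x y : 𝕜) (P : Matrix (Fin 3) (Fin 3) 𝕜), P.IsRankOneProjection ∧ A = x • 1 + y • P := by
  obtain ⟨i, j, hij, hne⟩ := Function.not_injective_iff.1 h
  have third : ∀ i j : Fin 3, i ≠ j → ∃ k, ∀ l ≠ k, l = i ∨ l = j := by decide
  obtain ⟨k, hk⟩ := third i j hne
  have hd : ∀ l ≠ k, (RCLike.ofReal ∘ hA.eigenvalues) l = (hA.eigenvalues i : 𝕜) := by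
    intro l hl
    rcases hk l hl with rfl | rfl
    · rfl
    · simp [hij]
  set φ := conjStarAlgAut 𝕜 _ hA.eigenvectorUnitary
  refine ⟨hA.eigenvalues i, (RCLike.ofReal ∘ hA.eigenvalues) k - hA.eigenvalues i,
    φ (single k k 1), (IsRankOneProjection.single k).map φ, ?_⟩
  conv_lhs => rw [hA.spectral_theorem, diagonal_eq_smul_one_add_smul_single hd]
  rw [map_add, map_smul, map_smul, map_one]

end IsHermitian

end Matrix

theorem stmt13 (ρ σ ρ₀ σ₀ : Matrix (Fin 3) (Fin 3) ℂ)
    (hρ : ρ.PosSemidef) (htρ : trace ρ = 1)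
    (hσ : σ.PosSemidef) (htσ : trace σ = 1)
    (hρ₀ : ρ₀.PosSemidef) (htρ₀ : trace ρ₀ = 1)
    (hσ₀ : σ₀.PosSemidef) (htσ₀ : trace σ₀ = 1)
    (h2ρ : trace (ρ ^ 2) = trace (ρ₀ ^ 2))
    (h3ρ : trace (ρ ^ 3) = trace (ρ₀ ^ 3))
    (h2σ : trace (σ ^ 2) = trace (σ₀ ^ 2))
    (h3σ : trace (σ ^ 3) = trace (σ₀ ^ 3))
    (h12 : trace (ρ * σ) = trace (ρ₀ * σ₀))
    (h112 : trace (ρ ^ 2 * σ) = trace (ρ₀ ^ 2 * σ₀))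
    (h122 : trace (ρ * σ ^ 2) = trace (ρ₀ * σ₀ ^ 2))
    (hcomm : ρ₀ * σ₀ = σ₀ * ρ₀) :
    ρ * σ = σ * ρ := by
  have h1ρ : trace ρ = trace ρ₀ := htρ.trans htρ₀.symm
  have h1σ : trace σ = trace σ₀ := htσ.trans htσ₀.symm
  obtain ⟨U, hU⟩ := hρ.1.exists_conj_eq_of_trace_pow_eq hρ₀.1 h1ρ h2ρ h3ρ
  obtain ⟨V, hV⟩ := hσ.1.exists_conj_eq_of_trace_pow_eq hσ₀.1 h1σ h2σ h3σ
  by_cases hσinj : Function.Injective hσ₀.1.eigenvalues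
  · refine hρ.1.commute_of_injective_eigenvalues hσ.1 hρ₀.1 hσ₀.1 hσinj hcomm h2ρ ?_
      fun q => by rw [hV, trace_aeval_conjStarAlgAut]
    intro k hk
    rw [Fintype.card_fin] at hk
    interval_cases k <;> simp [h1ρ, h12, h122]
  by_cases hρinj : Function.Injective hρ₀.1.eigenvalues
  · refine (hσ.1.commute_of_injective_eigenvalues hρ.1 hσ₀.1 hρ₀.1 hρinj hcomm.symm h2σ ?_
      fun q => by rw [hU, trace_aeval_conjStarAlgAut]).symm
    intro k hk
    rw [Fintype.card_fin] at hk
    interval_cases k <;> simp [trace_mul_comm σ, trace_mul_comm σ₀, h1σ, h12, h112]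
  obtain ⟨x, y, P₀, hP₀, rfl⟩ := hρ₀.1.exists_eq_smul_one_add_smul_of_not_injective hρinj
  obtain ⟨v, w, Q₀, hQ₀, rfl⟩ := hσ₀.1.exists_eq_smul_one_add_smul_of_not_injective hσinj
  simp only [map_add, map_smul, map_one] at hU hV
  rw [hU, hV] at h12 ⊢
  exact (hP₀.map _).commute_smul_one_add_smul_of_trace_mul_eq (hQ₀.map _) hP₀ hQ₀ h12 hcomm
end
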